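/- arXiv:2411.04147 — 5 statements merged into one kernel-verified Lean document; each statement's English description precedes it below -/
import Mathlib

section
/- For natural numbers s ≥ 1 and i, j with s ≤ j < i ≤ 2s, the sum ∑_{j'=0}^{i-1} (-1)^{j'} C(i-j'-1, s) C(s, j-j') equals (-1)^{s+j}; moreover the same sum equals 0 whenever j ≥ i (with j, i in the stated ranges 0 ≤ j ≤ 2s, s ≤ i ≤ 2s). -/
/-- Binomial inversion: `∑ₖ (-1)^k C(s,k) C(a-k,t) = C(a-s, t-s)` for `s ≤ t`, `s ≤ a`. -/
private lemma stmt4_aux (t : ℕ) : ∀ s, s ≤ t → ∀ a, s ≤ a →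
    ∑ k ∈ Finset.range (s + 1),
        (-1 : ℤ) ^ k * (Nat.choose s k : ℤ) * (Nat.choose (a - k) t : ℤ)
      = (Nat.choose (a - s) (t - s) : ℤ) := by
  intro s
  induction s with
  | zero => intro _ a _; simp
  | succ s ih =>
    intro hst a ha
    have hst' : s ≤ t := by omega
    have ha1 : s ≤ a - 1 := by omega
    have ih1 := ih hst' (a - 1) ha1
    have ih2 := ih hst' a (by omega)
    -- rewrite ih2 by peeling off the k = 0 term
    rw [Finset.sum_range_succ'] at ih2
    have e2 : ∑ k ∈ Finset.range s,
        (-1 : ℤ) ^ (k + 1) * (Nat.choose s (k + 1) : ℤ) * (Nat.choose (a - (k + 1)) t : ℤ)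
        = (Nat.choose (a - s) (t - s) : ℤ) - (Nat.choose a t : ℤ) := by
      have h0 : ((-1 : ℤ) ^ 0 * (Nat.choose s 0 : ℤ) * (Nat.choose (a - 0) t : ℤ))
          = (Nat.choose a t : ℤ) := by simp
      rw [h0] at ih2
      linarith
    -- main computation
    rw [Finset.sum_range_succ']
    have hterm : ∀ k ∈ Finset.range (s + 1),
        (-1 : ℤ) ^ (k + 1) * (Nat.choose (s + 1) (k + 1) : ℤ) * (Nat.choose (a - (k + 1)) t : ℤ)
        = -((-1 : ℤ) ^ k * (Nat.choose s k : ℤ) * (Nat.choose (a - 1 - k) t : ℤ))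
          + (-1 : ℤ) ^ (k + 1) * (Nat.choose s (k + 1) : ℤ) * (Nat.choose (a - (k + 1)) t : ℤ) := by
      intro k hk
      have h1 : a - (k + 1) = a - 1 - k := by omega
      rw [Nat.choose_succ_succ, h1]
      push_cast
      ring
    rw [Finset.sum_congr rfl hterm, Finset.sum_add_distrib]
    have hA : ∑ k ∈ Finset.range (s + 1),
        -((-1 : ℤ) ^ k * (Nat.choose s k : ℤ) * (Nat.choose (a - 1 - k) t : ℤ))
        = -(Nat.choose (a - 1 - s) (t - s) : ℤ) := by
      rw [Finset.sum_neg_distrib, ih1]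
    have hB : ∑ k ∈ Finset.range (s + 1),
        (-1 : ℤ) ^ (k + 1) * (Nat.choose s (k + 1) : ℤ) * (Nat.choose (a - (k + 1)) t : ℤ)
        = (Nat.choose (a - s) (t - s) : ℤ) - (Nat.choose a t : ℤ) := by
      rw [Finset.sum_range_succ]
      simp only [Nat.choose_succ_self, Nat.cast_zero, mul_zero, zero_mul, add_zero]
      -- need sign handling: the e2 sum matches after rewriting sign
      have : ∀ k ∈ Finset.range s,
          (-1 : ℤ) ^ (k + 1) * (Nat.choose s (k + 1) : ℤ) * (Nat.choose (a - (k + 1)) t : ℤ)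
          = (-1 : ℤ) ^ (k + 1) * (Nat.choose s (k + 1) : ℤ) * (Nat.choose (a - (k + 1)) t : ℤ) :=
        fun _ _ => rfl
      exact e2
    rw [hA, hB]
    have h0 : ((-1 : ℤ) ^ 0 * (Nat.choose (s + 1) 0 : ℤ) * (Nat.choose (a - 0) t : ℤ))
        = (Nat.choose a t : ℤ) := by simp
    rw [h0]
    -- Pascal: C(a-s, t-s) = C(a-s-1, t-s-1) + C(a-s-1, t-s)
    have hp : Nat.choose (a - s) (t - s)
        = Nat.choose (a - s - 1) (t - s - 1) + Nat.choose (a - s - 1) (t - s) := by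
      have e1 : a - s = (a - s - 1) + 1 := by omega
      have e2' : t - s = (t - s - 1) + 1 := by omega
      rw [e1, e2', Nat.choose_succ_succ]
      simp [Nat.succ_eq_add_one]
    have eq1 : a - 1 - s = a - s - 1 := by omega
    have eq2 : a - (s + 1) = a - s - 1 := by omega
    have eq3 : t - (s + 1) = t - s - 1 := by omega
    rw [eq1, eq2, eq3, hp]
    push_cast
    ring

private lemma stmt4_L2 (s : ℕ) (hs : 1 ≤ s) : ∀ j, s ≤ j → ∀ a,
    ∑ k ∈ Finset.range (j + 1),
        (-1 : ℤ) ^ k * (Nat.choose (a - k) s : ℤ) * (Nat.choose s (j - k) : ℤ)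
      = if j ≤ a then (-1 : ℤ) ^ (s + j) else 0 := by
  intro j hj
  induction j, hj using Nat.le_induction with
  | base =>
    intro a
    by_cases ha : s ≤ a
    · have hterm : ∀ k ∈ Finset.range (s + 1),
          (-1 : ℤ) ^ k * (Nat.choose (a - k) s : ℤ) * (Nat.choose s (s - k) : ℤ)
          = (-1 : ℤ) ^ k * (Nat.choose s k : ℤ) * (Nat.choose (a - k) s : ℤ) := by
        intro k hk
        rw [Finset.mem_range] at hk
        rw [Nat.choose_symm (by omega)]
        ring
      rw [Finset.sum_congr rfl hterm, stmt4_aux s s le_rfl a ha]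
      simp only [Nat.sub_self, Nat.choose_zero_right, Nat.cast_one]
      rw [if_pos ha]
      rw [← two_mul]
      rw [pow_mul]
      norm_num
    · have hterm : ∀ k ∈ Finset.range (s + 1),
          (-1 : ℤ) ^ k * (Nat.choose (a - k) s : ℤ) * (Nat.choose s (s - k) : ℤ) = 0 := by
        intro k hk
        have : Nat.choose (a - k) s = 0 := Nat.choose_eq_zero_of_lt (by omega)
        rw [this]; push_cast; ring
      rw [Finset.sum_congr rfl hterm, Finset.sum_const, smul_zero, if_neg ha]
  | succ j hj ih =>
    intro a
    match a with
    | 0 =>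
      have hterm : ∀ k ∈ Finset.range (j + 1 + 1),
          (-1 : ℤ) ^ k * (Nat.choose (0 - k) s : ℤ) * (Nat.choose s (j + 1 - k) : ℤ) = 0 := by
        intro k hk
        have h0 : (0 : ℕ) - k = 0 := by omega
        have : Nat.choose (0 - k) s = 0 := by
          rw [h0]; exact Nat.choose_eq_zero_of_lt (by omega)
        rw [this]; push_cast; ring
      rw [Finset.sum_congr rfl hterm, Finset.sum_const, smul_zero, if_neg (by omega)]
    | a + 1 =>
      rw [Finset.sum_range_succ']
      have h0 : ((-1 : ℤ) ^ 0 * (Nat.choose (a + 1 - 0) s : ℤ)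
          * (Nat.choose s (j + 1 - 0) : ℤ)) = 0 := by
        have : Nat.choose s (j + 1) = 0 := Nat.choose_eq_zero_of_lt (by omega)
        simp [this]
      rw [h0, add_zero]
      have hterm : ∀ k ∈ Finset.range (j + 1),
          (-1 : ℤ) ^ (k + 1) * (Nat.choose (a + 1 - (k + 1)) s : ℤ)
            * (Nat.choose s (j + 1 - (k + 1)) : ℤ)
          = -((-1 : ℤ) ^ k * (Nat.choose (a - k) s : ℤ) * (Nat.choose s (j - k) : ℤ)) := by
        intro k hk
        have e1 : a + 1 - (k + 1) = a - k := by omega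
        have e2 : j + 1 - (k + 1) = j - k := by omega
        rw [e1, e2, pow_succ]
        ring
      rw [Finset.sum_congr rfl hterm, Finset.sum_neg_distrib, ih a]
      by_cases hja : j ≤ a
      · rw [if_pos hja, if_pos (by omega)]
        have e : s + (j + 1) = (s + j) + 1 := by omega
        rw [e, pow_succ]
        ring
      · rw [if_neg hja, if_neg (by omega), neg_zero]

/-- For `s ≥ 1`, `s ≤ i ≤ 2s`, `j ≤ 2s`:
(a) if `s ≤ j < i` then `∑_{j'=0}^{i-1} (-1)^{j'} C(i-j'-1, s) C(s, j-j') = (-1)^{s+j}`;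
(b) if `i ≤ j` then the sum is `0`.  Here `C(s, j-j')` is taken to be `0` when `j' > j`. -/
theorem stmt4 (s i j : ℕ) (hs : 1 ≤ s) (hsi : s ≤ i) (hi : i ≤ 2 * s) (hj : j ≤ 2 * s) :
    ((s ≤ j ∧ j < i) →
      ∑ j' ∈ Finset.range i,
          (-1 : ℤ) ^ j' * (Nat.choose (i - j' - 1) s : ℤ) *
            (if j' ≤ j then (Nat.choose s (j - j') : ℤ) else 0)
        = (-1 : ℤ) ^ (s + j))
    ∧ (i ≤ j →
      ∑ j' ∈ Finset.range i,
          (-1 : ℤ) ^ j' * (Nat.choose (i - j' - 1) s : ℤ) *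
            (if j' ≤ j then (Nat.choose s (j - j') : ℤ) else 0)
        = 0) := by
  constructor
  · rintro ⟨hsj, hji⟩
    have hsub : Finset.range (j + 1) ⊆ Finset.range i := by
      intro x hx
      rw [Finset.mem_range] at *
      omega
    rw [← Finset.sum_subset hsub (by
      intro x hx hx'
      rw [Finset.mem_range] at hx
      rw [Finset.mem_range] at hx'
      rw [if_neg (by omega)]
      ring)]
    have hterm : ∀ k ∈ Finset.range (j + 1),
        (-1 : ℤ) ^ k * (Nat.choose (i - k - 1) s : ℤ) *
            (if k ≤ j then (Nat.choose s (j - k) : ℤ) else 0)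
        = (-1 : ℤ) ^ k * (Nat.choose (i - 1 - k) s : ℤ) * (Nat.choose s (j - k) : ℤ) := by
      intro k hk
      rw [Finset.mem_range] at hk
      rw [if_pos (by omega)]
      have e : i - k - 1 = i - 1 - k := by omega
      rw [e]
    rw [Finset.sum_congr rfl hterm, stmt4_L2 s hs j hsj (i - 1), if_pos (by omega)]
  · intro hij
    have hsj : s ≤ j := le_trans hsi hij
    have hsub : Finset.range i ⊆ Finset.range (j + 1) := by
      intro x hx
      rw [Finset.mem_range] at *
      omega
    have hterm : ∀ k ∈ Finset.range i,
        (-1 : ℤ) ^ k * (Nat.choose (i - k - 1) s : ℤ) *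
            (if k ≤ j then (Nat.choose s (j - k) : ℤ) else 0)
        = (-1 : ℤ) ^ k * (Nat.choose (i - 1 - k) s : ℤ) * (Nat.choose s (j - k) : ℤ) := by
      intro k hk
      rw [Finset.mem_range] at hk
      rw [if_pos (by omega)]
      have e : i - k - 1 = i - 1 - k := by omega
      rw [e]
    rw [Finset.sum_congr rfl hterm]
    rw [Finset.sum_subset hsub (by
      intro x hx hx'
      rw [Finset.mem_range] at hx
      rw [Finset.mem_range] at hx'
      have : Nat.choose (i - 1 - x) s = 0 := by
        have h0 : i - 1 - x = 0 := by omega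
        rw [h0]
        exact Nat.choose_eq_zero_of_lt (by omega)
      rw [this]
      push_cast
      ring)]
    rw [stmt4_L2 s hs j hsj (i - 1), if_neg (by omega)]
end

section
/- With h_{s,i,j} defined by the recursion h_{s,0,j} = C(s+j-1,j)(s-j)/s, h_{s,i,j} = -((s-j+1)/i) h_{s,i-1,j-1} - ((j-i)/i) h_{s,i-1,j} for i ≥ 1, and h_{s,i,j} = 0 for j ≤ i, the explicit formula h_{s,i,j} = (-1)^{j+1} C(s,j)·[j ≤ i] + (-1)^{i+1} C(2s,i) C(s+j-i-1, s) + (-1)^i (2s-i) C(2s,i) ∑_{t=0}^{i} (-1)^t (2s-t)^{-1} C(i,t) C(s-t-1+j, j) holds for all 0 ≤ i < j ≤ s. -/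
/-!
Write `h s i j = (-1)^i C(2s,i) ((2s-i) S(i,j) - C(s+j-i-1,s))`, where `S(i,j)` is the alternating
sum of the statement, and induct on `i`. Dividing the recurrence by `(-1)^i C(2s,i)` splits it into
two three-term relations: one for `C(s+j-i-1,s)`, which is the absorption identity for binomial
coefficients, and `(2s-i-1) S(i+1,j) = (s-j+1) S(i,j-1) + (j-i-1) S(i,j)` for the sums. The latter
holds termwise up to a telescoping difference, with potential `(-1)^t C(i,t-1) C(s-t-1+j,j)`.
-/

/-- The two-dimensional coefficient sequence of the paper. -/
def h (s : ℕ) : ℕ → ℕ → ℚ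
  | 0, j => if j ≤ 0 then 0 else (Nat.choose (s + j - 1) j : ℚ) * ((s : ℚ) - j) / s
  | i + 1, j =>
      if j ≤ i + 1 then 0
      else -(((s : ℚ) - j + 1) / (i + 1 : ℚ)) * h s i (j - 1)
           - (((j : ℚ) - (i + 1 : ℚ)) / (i + 1 : ℚ)) * h s i j

open Finset

section CastChoose

variable {R : Type*} [CommRing R]

theorem Nat.cast_choose_mul_succ (n k : ℕ) :
    (n.choose k : R) * (n + 1) = (n + 1).choose k * (n + 1 - k) := by
  rcases le_or_gt k (n + 1) with hk | hk
  · have := congrArg (Nat.cast : ℕ → R) (Nat.choose_mul_succ_eq n k)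
    push_cast [hk] at this
    exact this
  · simp [Nat.choose_eq_zero_of_lt hk, Nat.choose_eq_zero_of_lt (Nat.lt_of_succ_lt hk)]

theorem Nat.cast_choose_succ_right_mul (n k : ℕ) :
    (n.choose (k + 1) : R) * (k + 1) = n.choose k * (n - k) := by
  rcases le_or_gt k n with hk | hk
  · have := congrArg (Nat.cast : ℕ → R) (Nat.choose_succ_right_eq n k)
    push_cast [hk] at this
    exact this
  · simp [Nat.choose_eq_zero_of_lt hk, Nat.choose_eq_zero_of_lt (Nat.lt_succ_of_lt hk)]

end CastChoose

def altTerm (s i j t : ℕ) : ℚ :=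
  (-1 : ℚ) ^ t / ((2 * s : ℚ) - t) * (i.choose t : ℚ) * ((s - t - 1 + j).choose j : ℚ)

def altSum (s i j : ℕ) : ℚ :=
  ∑ t ∈ range (i + 1), altTerm s i j t

/-- `(-1)^t C(i, t-1) C(s-t-1+j, j)`, written without the truncated `t - 1` via Pascal's rule. -/
def altPotential (s i j t : ℕ) : ℚ :=
  (-1 : ℚ) ^ t * (((i + 1).choose t : ℚ) - i.choose t) * ((s - t - 1 + j).choose j : ℚ)

theorem altTerm_telescope {s i j t : ℕ} (hj : 1 ≤ j) (ht : t + 2 ≤ s) :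
    ((s : ℚ) - j + 1) * altTerm s i (j - 1) t + ((j : ℚ) - i - 1) * altTerm s i j t
      - (2 * s - i - 1) * altTerm s (i + 1) j t
      = altPotential s i j (t + 1) - altPotential s i j t := by
  obtain ⟨m, rfl⟩ : ∃ m, s = t + m + 2 := ⟨s - t - 2, by omega⟩
  obtain ⟨k, rfl⟩ : ∃ k, j = k + 1 := ⟨j - 1, by omega⟩
  unfold altTerm altPotential
  rw [show t + m + 2 - t - 1 + (k + 1) = m + k + 2 by omega,
    show t + m + 2 - t - 1 + (k + 1 - 1) = m + k + 1 by omega,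
    show t + m + 2 - (t + 1) - 1 + (k + 1) = m + k + 1 by omega, add_tsub_cancel_right]
  have hpascal :
      ((m + k + 2).choose (k + 1) : ℚ) = (m + k + 1).choose k + (m + k + 1).choose (k + 1) := by
    exact_mod_cast Nat.choose_succ_succ' (m + k + 1) k
  have habsorb := Nat.cast_choose_mul_succ (R := ℚ) (m + k + 1) (k + 1)
  have hpascal_i : ((i + 1).choose (t + 1) : ℚ) = i.choose t + i.choose (t + 1) := by
    exact_mod_cast Nat.choose_succ_succ' i t
  have hrow := Nat.cast_choose_mul_succ (R := ℚ) i t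
  have hx : (2 * ((t + m + 2 : ℕ) : ℚ) - t) ≠ 0 := by push_cast; ring_nf; positivity
  push_cast at habsorb hrow hx ⊢
  field_simp
  linear_combination (-1 : ℚ) ^ t * (-((m : ℚ) + 2 - k + t) * (i.choose t : ℚ) * hpascal
    + (2 * ((t : ℚ) + m + 2) - t) * ((m + k + 1).choose (k + 1) : ℚ) * hpascal_i
    + (i.choose t : ℚ) * habsorb - ((m + k + 2).choose (k + 1) : ℚ) * hrow)

theorem altSum_succ_left {s i j : ℕ} (hij : i + 1 < j) (hj : j ≤ s) :
    (2 * s - i - 1 : ℚ) * altSum s (i + 1) j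
      = ((s : ℚ) - j + 1) * altSum s i (j - 1) + ((j : ℚ) - i - 1) * altSum s i j := by
  have htele := sum_range_sub (altPotential s i j) (i + 1)
  rw [← sum_congr rfl fun t ht =>
      altTerm_telescope (i := i) (by omega) (by rw [mem_range] at ht; omega)] at htele
  simp only [sum_sub_distrib, sum_add_distrib, ← mul_sum] at htele
  have hpot_zero : altPotential s i j 0 = 0 := by simp [altPotential]
  have htop : (2 * s - i - 1 : ℚ) * altTerm s (i + 1) j (i + 1) = altPotential s i j (i + 1) := by
    have hx : (2 * s - (i + 1) : ℚ) ≠ 0 := by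
      have : (i : ℚ) + 1 < 2 * s := by exact_mod_cast (show i + 1 < 2 * s by omega)
      linarith
    simp only [altTerm, altPotential, Nat.choose_self, Nat.choose_succ_self]
    push_cast
    field_simp
    ring
  unfold altSum
  rw [sum_range_succ, mul_add, htop]
  linear_combination hpot_zero - htele

theorem h_eq_altSum {s : ℕ} : ∀ {i j : ℕ}, i < j → j ≤ s →
    h s i j = (-1 : ℚ) ^ i * (2 * s).choose i
      * ((2 * s - i) * altSum s i j - (s + j - i - 1).choose s)
  | 0, j, hij, hj => by
    obtain ⟨k, rfl⟩ : ∃ k, j = k + 1 := ⟨j - 1, by omega⟩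
    have hs : (s : ℚ) ≠ 0 := by exact_mod_cast (show s ≠ 0 by omega)
    have hsucc := Nat.cast_choose_succ_right_mul (R := ℚ) (s + k) k
    have hsymm : (s + k).choose s = (s + k).choose k := Nat.choose_symm_add
    rw [h, if_neg (by omega), altSum, sum_range_one, altTerm,
      show s + (k + 1) - 1 = s + k by omega, show s - 0 - 1 + (k + 1) = s + k by omega,
      show s + (k + 1) - 0 - 1 = s + k by omega, hsymm, Nat.choose_zero_right, Nat.choose_self]
    push_cast at hsucc ⊢
    field_simp
    linear_combination -hsucc
  | i + 1, j, hij, hj => by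
    obtain ⟨d, rfl⟩ : ∃ d, j = i + 2 + d := ⟨j - i - 2, by omega⟩
    have hprev := h_eq_altSum (s := s) (i := i) (j := i + 2 + d - 1) (by omega) (by omega)
    have hsame := h_eq_altSum (s := s) (i := i) (j := i + 2 + d) (by omega) hj
    have hstep := altSum_succ_left (s := s) (i := i) (j := i + 2 + d) (by omega) hj
    have hcentral := Nat.cast_choose_succ_right_mul (R := ℚ) (2 * s) i
    have habsorb := Nat.cast_choose_mul_succ (R := ℚ) (s + d) s
    rw [h, if_neg (by omega), hprev, hsame,
      show s + (i + 2 + d - 1) - i - 1 = s + d by omega,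
      show s + (i + 2 + d) - (i + 1) - 1 = s + d by omega,
      show s + (i + 2 + d) - i - 1 = s + d + 1 by omega]
    push_cast at hcentral habsorb hstep ⊢
    field_simp
    linear_combination (-1 : ℚ) ^ i * ((2 * s).choose i : ℚ) * (2 * s - i) * hstep
      - (-1 : ℚ) ^ i * ((2 * s).choose i : ℚ) * habsorb
      + (-1 : ℚ) ^ i * ((2 * s - i - 1) * altSum s (i + 1) (i + 2 + d) - (s + d).choose s) * hcentral

theorem stmt9_general (s : ℕ) (i j : ℕ) (hij : i < j) (hj : j ≤ s) :
    h s i j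
      = (-1 : ℚ) ^ (j + 1) * (Nat.choose s j : ℚ) * (if j ≤ i then 1 else 0)
        + (-1 : ℚ) ^ (i + 1) * (Nat.choose (2 * s) i : ℚ) * (Nat.choose (s + j - i - 1) s : ℚ)
        + (-1 : ℚ) ^ i * ((2 * s : ℚ) - i) * (Nat.choose (2 * s) i : ℚ) *
            ∑ t ∈ Finset.range (i + 1),
              (-1 : ℚ) ^ t / ((2 * s : ℚ) - t) * (Nat.choose i t : ℚ) *
                (Nat.choose (s - t - 1 + j) j : ℚ) := by
  rw [h_eq_altSum hij hj, if_neg (by omega), altSum]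
  simp only [altTerm]
  ring

/-- Explicit three-term formula for the sequence, for 0 ≤ i < j ≤ s. -/
theorem stmt9 (s : ℕ) (hs : 1 ≤ s) (i j : ℕ) (hij : i < j) (hj : j ≤ s) :
    h s i j
      = (-1 : ℚ) ^ (j + 1) * (Nat.choose s j : ℚ) * (if j ≤ i then 1 else 0)
        + (-1 : ℚ) ^ (i + 1) * (Nat.choose (2 * s) i : ℚ) * (Nat.choose (s + j - i - 1) s : ℚ)
        + (-1 : ℚ) ^ i * ((2 * s : ℚ) - i) * (Nat.choose (2 * s) i : ℚ) *
            ∑ t ∈ Finset.range (i + 1),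
              (-1 : ℚ) ^ t / ((2 * s : ℚ) - t) * (Nat.choose i t : ℚ) *
                (Nat.choose (s - t - 1 + j) j : ℚ) :=
  stmt9_general s i j hij hj
end

section
/- For a fixed positive integer s, define h_{s,i,j} by the recursion h_{s,0,j} = C(s+j-1,j)(s-j)/s, h_{s,i,j} = -((s-j+1)/i) h_{s,i-1,j-1} - ((j-i)/i) h_{s,i-1,j}, and h_{s,i,j} = 0 for j ≤ i. Then for each j with 1 ≤ j ≤ s, the column sum satisfies ∑_{i=0}^{j-1} h_{s,i,j} = (-1)^{j+1} (s-1) C(s-1, j-1). -/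
/-
Extended by zero, the recursion holds for all i and j in the form
(i+1) h(i+1, j+1) + (j-i) h(i, j+1) + (s-j) h(i, j) = 0.
Summed over i, the first two terms add up to j times the column sum S(j+1),
so j S(j+1) = -(s-j) S(j): the column sums satisfy the ratio recursion of
(-1)^j (s-1) C(s-1, j), and they start from S(1) = h(0, 1) = s - 1.
Of the initial row only the entry h(0, 1) matters.
-/

open Finset

lemma Nat.cast_succ_mul_choose_succ {R : Type*} [CommRing R] (n k : ℕ) :
    ((k : R) + 1) * (n.choose (k + 1) : R) = ((n : R) - k) * (n.choose k : R) := by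
  rcases le_or_gt k n with hkn | hnk
  · have := congrArg (Nat.cast : ℕ → R) (Nat.choose_succ_right_eq n k)
    push_cast [Nat.cast_sub hkn] at this
    linear_combination this
  · simp [Nat.choose_eq_zero_of_lt hnk, Nat.choose_eq_zero_of_lt (Nat.lt_succ_of_lt hnk)]

namespace h

variable (s : ℕ)

lemma eq_zero_of_le {i j : ℕ} (hji : j ≤ i) : h s i j = 0 := by
  cases i with
  | zero => simp [h, hji]
  | succ i => simp [h, hji]

lemma succ_mul_succ_succ (i j : ℕ) :
    ((i : ℚ) + 1) * h s (i + 1) (j + 1)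
      = -((s : ℚ) - j) * h s i j - ((j : ℚ) - i) * h s i (j + 1) := by
  rcases le_or_gt (j + 1) (i + 1) with hji | hij
  · rw [eq_zero_of_le s hji, eq_zero_of_le s (by omega : j ≤ i)]
    rcases (Nat.le_of_succ_le_succ hji).eq_or_lt with rfl | hji
    · ring
    · rw [eq_zero_of_le s hji]
      ring
  · rw [h, if_neg (by omega), Nat.add_sub_cancel]
    field_simp
    push_cast
    ring

def colSum (j : ℕ) : ℚ := ∑ i ∈ range j, h s i j

lemma mul_colSum_succ (j : ℕ) : (j : ℚ) * colSum s (j + 1) = -((s : ℚ) - j) * colSum s j := by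
  have hsum := Finset.sum_congr rfl fun i (_ : i ∈ range (j + 1)) => succ_mul_succ_succ s i j
  rw [Finset.sum_sub_distrib, ← Finset.mul_sum] at hsum
  have hshift : ∑ i ∈ range (j + 1), ((i : ℚ) + 1) * h s (i + 1) (j + 1)
      = ∑ i ∈ range (j + 1), (i : ℚ) * h s i (j + 1) := by
    have := (Finset.sum_range_succ' (fun i => (i : ℚ) * h s i (j + 1)) (j + 1)).symm
    rw [Finset.sum_range_succ _ (j + 1), eq_zero_of_le s le_rfl] at this
    simpa using this
  have hsplit : ∑ i ∈ range (j + 1), (j : ℚ) * h s i (j + 1)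
      = ∑ i ∈ range (j + 1), (i : ℚ) * h s i (j + 1)
        + ∑ i ∈ range (j + 1), ((j : ℚ) - i) * h s i (j + 1) := by
    rw [← Finset.sum_add_distrib]
    exact Finset.sum_congr rfl fun i _ => by ring
  rw [Finset.sum_range_succ (fun i => h s i j) j, eq_zero_of_le s le_rfl, add_zero] at hsum
  rw [colSum, colSum, Finset.mul_sum]
  linear_combination hsplit - hshift + hsum

variable {s}

lemma colSum_one (hs : 1 ≤ s) : colSum s 1 = s - 1 := by
  have : (s : ℚ) ≠ 0 := by positivity
  simp only [colSum, range_one, sum_singleton, h, nonpos_iff_eq_zero, one_ne_zero, ↓reduceIte,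
    add_tsub_cancel_right, Nat.choose_one_right, Nat.cast_one]
  field_simp

lemma colSum_succ (hs : 1 ≤ s) (j : ℕ) :
    colSum s (j + 1) = (-1) ^ j * ((s : ℚ) - 1) * ((s - 1).choose j : ℚ) := by
  induction j with
  | zero => simp [colSum_one hs]
  | succ j ih =>
    have hrec := mul_colSum_succ s (j + 1)
    have hchoose := Nat.cast_succ_mul_choose_succ (R := ℚ) (s - 1) j
    rw [Nat.cast_sub hs, Nat.cast_one] at hchoose
    rw [ih] at hrec
    push_cast at hrec
    refine mul_left_cancel₀ (by positivity : (j : ℚ) + 1 ≠ 0) ?_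
    linear_combination hrec - (-1) ^ (j + 1) * ((s : ℚ) - 1) * hchoose

end h

theorem stmt10_general (s : ℕ) (hs : 1 ≤ s) (j : ℕ) (hj1 : 1 ≤ j) :
    ∑ i ∈ Finset.range j, h s i j
      = (-1 : ℚ) ^ (j + 1) * ((s : ℚ) - 1) * (Nat.choose (s - 1) (j - 1) : ℚ) := by
  obtain ⟨k, rfl⟩ : ∃ k, j = k + 1 := ⟨j - 1, by omega⟩
  rw [← h.colSum, h.colSum_succ hs, Nat.add_sub_cancel, pow_succ]
  ring

/-- Column sums of the sequence, for 1 ≤ j ≤ s. -/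
theorem stmt10 (s : ℕ) (hs : 1 ≤ s) (j : ℕ) (hj1 : 1 ≤ j) (hj2 : j ≤ s) :
    ∑ i ∈ Finset.range j, h s i j
      = (-1 : ℚ) ^ (j + 1) * ((s : ℚ) - 1) * (Nat.choose (s - 1) (j - 1) : ℚ) :=
  stmt10_general s hs j hj1
end

section
/- For a fixed positive integer s, the generating function H_{s,i}(x) = ∑_{j≥i+1} h_{s,i,j} x^j satisfies, for i ≥ 1, the differential recurrence H_{s,i}(x) = -(s x / i - 1) H_{s,i-1}(x) + (x(x-1)/i) H'_{s,i-1}(x), where H' is the derivative with respect to x. -/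
namespace PowerSeries

variable {R : Type*} [CommRing R]

theorem coeff_succ_X_mul_X_sub_one_mul_derivative (f : R⟦X⟧) (n : ℕ) :
    coeff (n + 1) (X * (X - 1) * derivative R f) = n * coeff n f - (n + 1) * coeff (n + 1) f := by
  rw [mul_assoc, coeff_succ_X_mul, sub_mul, one_mul, map_sub, coeff_derivative]
  rcases n with _ | n
  · simp
  · rw [coeff_succ_X_mul, coeff_derivative]
    push_cast
    ring

end PowerSeries

open PowerSeries

theorem h_eq_zero_of_le {s i j : ℕ} (hj : j ≤ i) : h s i j = 0 := by
  cases i <;> simp [h, hj]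

theorem h_succ_succ (s k j : ℕ) :
    h s (k + 1) (j + 1) =
      -(((s : ℚ) - j) / (k + 1)) * h s k j - (((j : ℚ) - k) / (k + 1)) * h s k (j + 1) := by
  by_cases hjk : j ≤ k
  · rw [h_eq_zero_of_le (by omega : j + 1 ≤ k + 1), h_eq_zero_of_le hjk]
    rcases hjk.lt_or_eq with hjk | rfl
    · rw [h_eq_zero_of_le hjk]
      ring
    · ring
  · simp only [h, add_le_add_iff_right, hjk, if_false, add_tsub_cancel_right]
    push_cast
    ring

theorem stmt12_general (s : ℕ) (i : ℕ) (hi : 1 ≤ i) :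
    PowerSeries.mk (fun j => h s i j)
      = -(PowerSeries.C (R := ℚ) ((s : ℚ) / i) * PowerSeries.X - 1) *
          PowerSeries.mk (fun j => h s (i - 1) j)
        + PowerSeries.C (R := ℚ) (1 / (i : ℚ)) * (PowerSeries.X * (PowerSeries.X - 1)) *
            (PowerSeries.derivative ℚ (PowerSeries.mk (fun j => h s (i - 1) j))) := by
  obtain ⟨k, rfl⟩ := Nat.exists_eq_add_of_le' hi
  ext (_ | n)
  · simp [h_eq_zero_of_le]
  · rw [mul_assoc, map_add, coeff_C_mul, coeff_succ_X_mul_X_sub_one_mul_derivative, neg_sub,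
      sub_mul, one_mul, map_sub, mul_assoc, coeff_C_mul, coeff_succ_X_mul]
    simp only [coeff_mk, Nat.add_sub_cancel, h_succ_succ]
    push_cast
    field_simp
    ring

/-- The generating functions of the rows of the sequence satisfy, for i ≥ 1,
the differential recurrence of the paper. -/
theorem stmt12 (s : ℕ) (hs : 1 ≤ s) (i : ℕ) (hi : 1 ≤ i) :
    PowerSeries.mk (fun j => h s i j)
      = -(PowerSeries.C (R := ℚ) ((s : ℚ) / i) * PowerSeries.X - 1) *
          PowerSeries.mk (fun j => h s (i - 1) j)
        + PowerSeries.C (R := ℚ) (1 / (i : ℚ)) * (PowerSeries.X * (PowerSeries.X - 1)) *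
            (PowerSeries.derivative ℚ (PowerSeries.mk (fun j => h s (i - 1) j))) :=
  stmt12_general s i hi
end

section
/- For positive integers s and natural numbers i, j with 0 ≤ i < s and i+1 ≤ j ≤ s, the sum ∑_{j'=i+1}^{j} (-1)^{j-j'} C(s+j'-i-1, s) C(s, j-j') equals 1. -/
/-!
In `ℤ⟦X⟧` we have `(1 - X) ^ s * ∑ₙ C(s + n, s) Xⁿ = (1 - X) ^ s * (1 - X)⁻¹ ^ (s + 1) = ∑ₙ Xⁿ`.
Comparing coefficients of `Xᵐ` gives `∑_{k + l = m} (-1)ᵏ C(s, k) C(s + l, s) = 1`, and the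
substitution `k = j - j'`, `l = j' - i - 1` turns this into the claim with `m = j - i - 1`.
-/

open Finset PowerSeries

theorem PowerSeries.coeff_one_sub_X_pow (R : Type*) [CommRing R] (s n : ℕ) :
    coeff n ((1 - X : R⟦X⟧) ^ s) = (-1) ^ n * s.choose n := by
  have h : (1 - X : R⟦X⟧) ^ s =
      rescale (-1) (((1 + Polynomial.X) ^ s : Polynomial R) : R⟦X⟧) := by
    simp [sub_eq_add_neg]
  rw [h, coeff_rescale, Polynomial.coeff_coe, Polynomial.coeff_one_add_X_pow]

theorem sum_antidiagonal_neg_one_pow_mul_choose_mul_add_choose (R : Type*) [CommRing R]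
    (s m : ℕ) :
    ∑ p ∈ antidiagonal m, (-1 : R) ^ p.1 * s.choose p.1 * (s + p.2).choose s = 1 := by
  have h := congrArg (coeff m)
    (one_sub_pow_mul_invOneSubPow_val_add_eq_invOneSubPow_val R 1 s)
  rw [add_comm 1 s, invOneSubPow_val_succ_eq_mk_add_choose,
    invOneSubPow_val_succ_eq_mk_add_choose, coeff_mul] at h
  simpa [coeff_one_sub_X_pow, mul_assoc] using h

theorem stmt16_general (s i j : ℕ) (hij : i < j) :
    ∑ j' ∈ Finset.Icc (i + 1) j,
        (-1 : ℤ) ^ (j - j') * (Nat.choose (s + j' - i - 1) s : ℤ) * (Nat.choose s (j - j') : ℤ)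
      = 1 := by
  refine (sum_nbij' (fun j' => (j - j', j' - i - 1)) (fun p => j - p.1) ?_ ?_ ?_ ?_ ?_).trans
    (sum_antidiagonal_neg_one_pow_mul_choose_mul_add_choose ℤ s (j - i - 1))
  all_goals simp only [mem_Icc, HasAntidiagonal.mem_antidiagonal, Prod.ext_iff]
  · omega
  · omega
  · omega
  · omega
  · intro j' hj'
    rw [show s + j' - i - 1 = s + (j' - i - 1) by omega]
    ring

/-- For `0 ≤ i < j ≤ s`, `∑_{j'=i+1}^{j} (-1)^{j-j'} C(s+j'-i-1, s) C(s, j-j') = 1`. -/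
theorem stmt16 (s i j : ℕ) (hs : 1 ≤ s) (hij : i < j) (hj : j ≤ s) :
    ∑ j' ∈ Finset.Icc (i + 1) j,
        (-1 : ℤ) ^ (j - j') * (Nat.choose (s + j' - i - 1) s : ℤ) * (Nat.choose s (j - j') : ℤ)
      = 1 :=
  stmt16_general s i j hij
end
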